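/- arXiv:1908.07449 — 2 statements merged into one kernel-verified Lean document; each statement's English description precedes it below -/
import Mathlib

section
/- (NOFOB with conservative step.) Suppose Assumption 1 holds, each M_k : H → H is 1-strongly monotone w.r.t. ‖·‖_P and L_M-Lipschitz continuous w.r.t. ‖·‖, S is a bounded self-adjoint strongly positive linear operator on H, and θ_k ∈ (0, 2) with liminf_{k→∞} θ_k(2 − θ_k) > 0. Suppose ε_μ > 0 and for every k the constant μ̂_k satisfies μ̂_k ≥ ε_μ and the global bound μ̂_k·‖M_k x − M_k y‖²_{S⁻¹} ≤ ⟨M_k x − M_k y, x − y⟩ − (β/4)‖x − y‖_P² for all x, y ∈ H with x ≠ y. Let x_0 ∈ H and for each k let x̂_k be the unique point with M_k x_k − C x_k − M_k x̂_k ∈ A x̂_k, and set x_{k+1} := x_k − θ_k μ̂_k S⁻¹(M_k x_k − M_k x̂_k). Then x_k converges weakly to some x̄ ∈ zer(A + C). -/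
open Filter Topology

/-- The norm `‖x‖_P := √⟨x, Px⟩` induced by a bounded self-adjoint strongly positive
linear operator `P`. -/
noncomputable def pnorm {H : Type*} [NormedAddCommGroup H] [InnerProductSpace ℝ H]
    (P : H →L[ℝ] H) (x : H) : ℝ := Real.sqrt (inner ℝ x (P x))

/-- A set-valued operator (identified with its graph) is monotone. -/
def IsMonotoneOp {H : Type*} [NormedAddCommGroup H] [InnerProductSpace ℝ H]
    (A : H → Set H) : Prop :=
  ∀ ⦃x u y v⦄, u ∈ A x → v ∈ A y → (0:ℝ) ≤ inner ℝ (u - v) (x - y)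

/-- A set-valued operator is maximally monotone. -/
def IsMaxMonotoneOp {H : Type*} [NormedAddCommGroup H] [InnerProductSpace ℝ H]
    (A : H → Set H) : Prop :=
  IsMonotoneOp A ∧ ∀ x u, (∀ y v, v ∈ A y → (0:ℝ) ≤ inner ℝ (u - v) (x - y)) → u ∈ A x

/-- Weak convergence of a sequence in a Hilbert space. -/
def WeakConvergesTo {H : Type*} [NormedAddCommGroup H] [InnerProductSpace ℝ H]
    (x : ℕ → H) (xbar : H) : Prop :=
  ∀ y : H, Tendsto (fun k => (inner ℝ (x k) y : ℝ)) atTop (nhds (inner ℝ xbar y))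

/-!
With `wₖ = Mₖ xₖ - Mₖ x̂ₖ`, the step is Fejér monotone in the `S`-metric: for every zero `z`,
monotonicity of `A`, cocoercivity of `C` (through a Young inequality in the `P`-metric) and the
step-length bound give `μ̂ₖ ‖wₖ‖²_{S⁻¹} ≤ ⟪wₖ, xₖ - z⟫`, hence
`‖xₖ₊₁ - z‖²_S ≤ ‖xₖ - z‖²_S - θₖ (2 - θₖ) μ̂ₖ² ‖wₖ‖²_{S⁻¹}`.
So the distances converge, `wₖ → 0`, and by strong monotonicity of `Mₖ` also `xₖ - x̂ₖ → 0`.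
Weak cluster points are taken along ultrafilters, where bounded sequences have weak limits.
Such a point `p` is a zero of `A + C`: passing to the limit in the monotonicity inequality of `A`
bounds the limit of `‖C xₖ - C p‖²_{P⁻¹}` by a pairing that maximality of `A` forces to vanish.
Opial's argument in the `S`-metric shows that the cluster point is unique.
-/

open scoped InnerProductSpace
open Bornology Set

section Operators

variable {H : Type*} [NormedAddCommGroup H] [InnerProductSpace ℝ H]

def IsStronglyPositive (P : H →L[ℝ] H) : Prop :=
  P.IsPositive ∧ ∃ c > 0, ∀ x : H, c * ‖x‖ ^ 2 ≤ ⟪x, P x⟫_ℝ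

lemma isStronglyPositive_of_isSelfAdjoint [CompleteSpace H] {P : H →L[ℝ] H}
    (hP : IsSelfAdjoint P) (hc : ∃ c > 0, ∀ x : H, c * ‖x‖ ^ 2 ≤ ⟪x, P x⟫_ℝ) :
    IsStronglyPositive P := by
  obtain ⟨c, hc, hle⟩ := hc
  refine ⟨(P.isPositive_iff').2 ⟨hP, fun x => ?_⟩, c, hc, hle⟩
  rw [real_inner_comm]
  exact (by positivity : 0 ≤ c * ‖x‖ ^ 2).trans (hle x)

lemma norm_le_of_mul_sq_le_inner {c : ℝ} {e w : H} (h : c * ‖e‖ ^ 2 ≤ ⟪w, e⟫_ℝ) :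
    c * ‖e‖ ≤ ‖w‖ := by
  rcases (norm_nonneg e).eq_or_lt with he | he
  · rw [← he, mul_zero]; exact norm_nonneg w
  · have := h.trans (real_inner_le_norm w e)
    nlinarith

lemma ContinuousLinearMap.IsPositive.pnorm_sq {P : H →L[ℝ] H} (hP : P.IsPositive) (x : H) :
    pnorm P x ^ 2 = ⟪x, P x⟫_ℝ :=
  Real.sq_sqrt (hP.inner_nonneg_right x)

lemma ContinuousLinearMap.IsPositive.real_inner_le_inner_inv_add_inner {P Pinv : H →L[ℝ] H}
    (hP : P.IsPositive) (hPinv : P.comp Pinv = .id ℝ H) {t : ℝ} (ht : 0 < t) (d e : H) :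
    ⟪d, e⟫_ℝ ≤ 1 / t * ⟪d, Pinv d⟫_ℝ + t / 4 * ⟪e, P e⟫_ℝ := by
  have hPP : P (Pinv d) = d := congr($hPinv d)
  have hsymm : ⟪Pinv d, P e⟫_ℝ = ⟪d, e⟫_ℝ := by
    rw [← hP.inner_left_eq_inner_right, hPP]
  -- expand `0 ≤ ‖Pinv d - (t / 2) • e‖²_P`
  have h := hP.inner_nonneg_right (Pinv d - (t / 2) • e)
  simp only [map_sub, map_smul, hPP, inner_sub_left, inner_sub_right, real_inner_smul_left,
    real_inner_smul_right, hsymm, real_inner_comm d (Pinv d), real_inner_comm d e] at h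
  refine le_of_mul_le_mul_left ?_ ht
  rw [mul_add, ← mul_assoc, mul_one_div_cancel ht.ne', one_mul]
  linarith

namespace IsStronglyPositive

variable {P Pinv : H →L[ℝ] H}

lemma inner_map_self_eq_zero (hP : IsStronglyPositive P) {x : H} :
    ⟪x, P x⟫_ℝ = 0 ↔ x = 0 := by
  obtain ⟨-, c, hc, hle⟩ := hP
  refine ⟨fun h => ?_, fun h => by simp [h]⟩
  by_contra hx
  have : 0 < c * ‖x‖ ^ 2 := by have := norm_pos_iff.2 hx; positivity
  linarith [hle x]

lemma of_comp_eq_id (hP : IsStronglyPositive P) (hPinv : P.comp Pinv = .id ℝ H) :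
    IsStronglyPositive Pinv := by
  obtain ⟨hpos, c, hc, hle⟩ := hP
  have hPP (v : H) : P (Pinv v) = v := congr($hPinv v)
  have hinner (v : H) : ⟪v, Pinv v⟫_ℝ = ⟪Pinv v, P (Pinv v)⟫_ℝ := by
    rw [hPP, real_inner_comm]
  refine ⟨(Pinv.isPositive_iff).2 ⟨fun a b => ?_, fun v => ?_⟩, c / (‖P‖ ^ 2 + 1), by positivity,
    fun v => ?_⟩
  · change ⟪Pinv a, b⟫_ℝ = ⟪a, Pinv b⟫_ℝ
    rw [← hPP b, ← hpos.inner_left_eq_inner_right, hPP, hPP]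
  · rw [real_inner_comm, hinner]
    exact hpos.inner_nonneg_right _
  · have hv : ‖v‖ ≤ ‖P‖ * ‖Pinv v‖ := by simpa only [hPP] using P.le_opNorm (Pinv v)
    rw [hinner, div_mul_eq_mul_div, div_le_iff₀ (by positivity)]
    calc c * ‖v‖ ^ 2 ≤ c * (‖P‖ * ‖Pinv v‖) ^ 2 := by gcongr
      _ ≤ c * ‖Pinv v‖ ^ 2 * (‖P‖ ^ 2 + 1) := by nlinarith [sq_nonneg ‖Pinv v‖]
      _ ≤ ⟪Pinv v, P (Pinv v)⟫_ℝ * (‖P‖ ^ 2 + 1) := by gcongr; exact hle _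

lemma tendsto_zero_of_tendsto_inner (hP : IsStronglyPositive P) {ι : Type*} {l : Filter ι}
    {v : ι → H} (h : Tendsto (fun i => ⟪v i, P (v i)⟫_ℝ) l (𝓝 0)) : Tendsto v l (𝓝 0) := by
  obtain ⟨-, c, hc, hle⟩ := hP
  have hsq : Tendsto (fun i => ‖v i‖ ^ 2) l (𝓝 0) :=
    squeeze_zero (fun i => by positivity) (fun i => (le_div_iff₀' hc).2 (hle (v i)))
      (by simpa using h.div_const c)
  rw [tendsto_zero_iff_norm_tendsto_zero]
  simpa using hsq.sqrt

lemma tendsto_zero_of_le_inner (hP : IsStronglyPositive P) {ι : Type*} {l : Filter ι}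
    {e w : ι → H} (h : ∀ i, pnorm P (e i) ^ 2 ≤ ⟪w i, e i⟫_ℝ) (hw : Tendsto w l (𝓝 0)) :
    Tendsto e l (𝓝 0) := by
  obtain ⟨hpos, c, hc, hle⟩ := hP
  have he (i : ι) : ‖e i‖ ≤ ‖w i‖ / c := by
    rw [le_div_iff₀' hc]
    exact norm_le_of_mul_sq_le_inner ((hle _).trans (hpos.pnorm_sq (e i) ▸ h i))
  rw [tendsto_zero_iff_norm_tendsto_zero] at hw ⊢
  exact squeeze_zero (fun i => norm_nonneg _) he (by simpa using hw.div_const c)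

lemma isBounded_sublevel (hP : IsStronglyPositive P) (z : H) (F : ℝ) :
    IsBounded {x | ⟪x - z, P (x - z)⟫_ℝ ≤ F} := by
  obtain ⟨-, c, hc, hle⟩ := hP
  refine (Metric.isBounded_closedBall (x := z) (r := √(F / c))).subset fun x hx => ?_
  rw [Metric.mem_closedBall, dist_eq_norm]
  exact Real.le_sqrt_of_sq_le ((le_div_iff₀' hc).2 ((hle _).trans hx))

end IsStronglyPositive

end Operators

theorem Ultrafilter.exists_tendsto_of_isBounded {ι E : Type*} [PseudoMetricSpace E] [ProperSpace E]
    (U : Ultrafilter ι) {f : ι → E} (hf : IsBounded (range f)) : ∃ a, Tendsto f U (𝓝 a) := by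
  obtain ⟨a, -, ha⟩ := hf.isCompact_closure.ultrafilter_le_nhds (U.map f) (by
    rw [Ultrafilter.coe_map, le_principal_iff, Filter.mem_map]
    exact Eventually.of_forall fun i => subset_closure (mem_range_self i))
  exact ⟨a, by rwa [Ultrafilter.coe_map] at ha⟩

section Weak

variable {H : Type*} [NormedAddCommGroup H] [InnerProductSpace ℝ H] {ι : Type*}

def WeakTendsto (v : ι → H) (l : Filter ι) (p : H) : Prop :=
  ∀ y : H, Tendsto (fun i => ⟪v i, y⟫_ℝ) l (𝓝 ⟪p, y⟫_ℝ)

lemma WeakTendsto.of_tendsto_sub {l : Filter ι} {u v : ι → H} {p : H} (hv : WeakTendsto v l p)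
    (h : Tendsto (fun i => v i - u i) l (𝓝 0)) : WeakTendsto u l p := fun y => by
  simpa [inner_sub_left] using (hv y).sub (h.inner (tendsto_const_nhds (x := y)))

lemma WeakTendsto.eq_of_tendsto {l : Filter ι} [l.NeBot] {v : ι → H} {p q : H}
    (hw : WeakTendsto v l p) (hs : Tendsto v l (𝓝 q)) : p = q :=
  ext_inner_right ℝ fun y => tendsto_nhds_unique (hw y) (hs.inner tendsto_const_nhds)

lemma tendsto_inner_zero_of_isBounded {l : Filter ι} {a b : ι → H} (ha : Tendsto a l (𝓝 0))
    (hb : IsBounded (range b)) : Tendsto (fun i => ⟪a i, b i⟫_ℝ) l (𝓝 0) := by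
  obtain ⟨B, hB⟩ := hb.exists_norm_le
  exact ha.op_zero_isBoundedUnder_le (isBoundedUnder_of ⟨B, fun i => hB _ (mem_range_self i)⟩)
    (fun x y => ⟪x, y⟫_ℝ) (fun x y => norm_inner_le_norm x y)

theorem Ultrafilter.exists_weakTendsto [CompleteSpace H] (U : Ultrafilter ι) {v : ι → H}
    (hv : IsBounded (range v)) : ∃ p, WeakTendsto v (U : Filter ι) p := by
  obtain ⟨c, hc⟩ := hv.exists_norm_le
  have hle (y : H) (i : ι) : ‖⟪v i, y⟫_ℝ‖ ≤ c * ‖y‖ :=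
    (norm_inner_le_norm _ _).trans (by gcongr; exact hc _ (mem_range_self i))
  choose φ hφ using fun y => U.exists_tendsto_of_isBounded (f := fun i => ⟪v i, y⟫_ℝ)
    (isBounded_iff_forall_norm_le.2 ⟨c * ‖y‖, forall_mem_range.2 (hle y)⟩)
  -- the pointwise limit is a bounded linear functional; its Riesz representative is the weak limit
  let φL : H →ₗ[ℝ] ℝ :=
    { toFun := φ
      map_add' := fun y z => tendsto_nhds_unique (hφ (y + z))
        (by simpa only [inner_add_right] using (hφ y).add (hφ z))
      map_smul' := fun t y => tendsto_nhds_unique (hφ (t • y))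
        (by simpa [real_inner_smul_right] using (hφ y).const_mul t) }
  refine ⟨(InnerProductSpace.toDual ℝ H).symm
    (φL.mkContinuous c fun y => le_of_tendsto' (hφ y).norm (hle y)), fun y => ?_⟩
  rw [InnerProductSpace.toDual_symm_apply]
  exact hφ y

end Weak

section Fejer

variable {H : Type*} [NormedAddCommGroup H] [InnerProductSpace ℝ H]

def IsFejerMonotone (S : H →L[ℝ] H) (F : Set H) (x : ℕ → H) : Prop :=
  ∀ z ∈ F, Antitone fun k => ⟪x k - z, S (x k - z)⟫_ℝ

namespace IsFejerMonotone

variable {S : H →L[ℝ] H} {F : Set H} {x : ℕ → H}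

lemma tendsto (hx : IsFejerMonotone S F x) (hS : S.IsPositive) {z : H} (hz : z ∈ F) :
    ∃ L, Tendsto (fun k => ⟪x k - z, S (x k - z)⟫_ℝ) atTop (𝓝 L) :=
  ⟨_, tendsto_atTop_ciInf (hx z hz) ⟨0, forall_mem_range.2 fun _ => hS.inner_nonneg_right _⟩⟩

lemma isBounded_range (hx : IsFejerMonotone S F x) (hS : IsStronglyPositive S) {z : H}
    (hz : z ∈ F) : IsBounded (range x) :=
  (hS.isBounded_sublevel z _).subset <| range_subset_iff.2 fun k => hx z hz (Nat.zero_le k)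

theorem exists_weakTendsto (hx : IsFejerMonotone S F x) (hS : IsStronglyPositive S)
    (hclus : ∀ U : Ultrafilter ℕ, (U : Filter ℕ) ≤ atTop →
      ∃ p ∈ F, WeakTendsto x (U : Filter ℕ) p) :
    ∃ p ∈ F, WeakTendsto x atTop p := by
  obtain ⟨p, hpF, hp⟩ := hclus (Ultrafilter.of atTop) (Ultrafilter.of_le _)
  refine ⟨p, hpF, fun y => (tendsto_iff_ultrafilter _ _ _).2 fun U hU => ?_⟩
  obtain ⟨q, hqF, hq⟩ := hclus U hU
  suffices q = p from this ▸ hq y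
  have hsymm (a b : H) : ⟪a, S b⟫_ℝ = ⟪b, S a⟫_ℝ := by
    rw [← hS.1.inner_left_eq_inner_right, real_inner_comm]
  -- `2 ⟪x k, S (p - q)⟫` is a difference of two convergent squared distances, up to a constant
  obtain ⟨m, hm⟩ : ∃ m, Tendsto (fun k => ⟪x k, S (p - q)⟫_ℝ) atTop (𝓝 m) := by
    obtain ⟨Lp, hLp⟩ := hx.tendsto hS.1 hpF
    obtain ⟨Lq, hLq⟩ := hx.tendsto hS.1 hqF
    refine ⟨_, ((hLq.sub hLp).add_const (⟪p, S p⟫_ℝ - ⟪q, S q⟫_ℝ)).div_const 2 |>.congr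
      fun k => ?_⟩
    simp only [map_sub, inner_sub_left, inner_sub_right, hsymm (x k) p, hsymm (x k) q]
    ring
  have hpm := tendsto_nhds_unique (hp (S (p - q))) (hm.mono_left (Ultrafilter.of_le _))
  have hqm := tendsto_nhds_unique (hq (S (p - q))) (hm.mono_left hU)
  have : ⟪p - q, S (p - q)⟫_ℝ = 0 := by rw [inner_sub_left, hpm, hqm, sub_self]
  exact (sub_eq_zero.1 (hS.inner_map_self_eq_zero.1 this)).symm

end IsFejerMonotone

lemma inner_map_sub_smul_inv_le {S Sinv : H →L[ℝ] H} (hS : S.IsPositive)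
    (hSinv : S.comp Sinv = .id ℝ H) {a w : H} {θ μ : ℝ} (hθμ : 0 ≤ θ * μ)
    (h : μ * ⟪w, Sinv w⟫_ℝ ≤ ⟪w, a⟫_ℝ) :
    ⟪a - (θ * μ) • Sinv w, S (a - (θ * μ) • Sinv w)⟫_ℝ
      ≤ ⟪a, S a⟫_ℝ - θ * (2 - θ) * μ ^ 2 * ⟪w, Sinv w⟫_ℝ := by
  have hSS : S (Sinv w) = w := congr($hSinv w)
  have hsymm : ⟪Sinv w, S a⟫_ℝ = ⟪w, a⟫_ℝ := by
    rw [← hS.inner_left_eq_inner_right, hSS]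
  simp only [map_sub, map_smul, hSS, inner_sub_left, inner_sub_right, real_inner_smul_left,
    real_inner_smul_right, hsymm, real_inner_comm w a, real_inner_comm w (Sinv w)]
  nlinarith [mul_le_mul_of_nonneg_left h hθμ]

lemma tendsto_zero_of_le_sub_mul {f a g : ℕ → ℝ} {L : ℝ} (hf : Tendsto f atTop (𝓝 L))
    (ha : 0 < liminf a atTop) (ha0 : ∀ k, 0 ≤ a k) (hg : ∀ k, 0 ≤ g k)
    (hle : ∀ k, f (k + 1) ≤ f k - a k * g k) : Tendsto g atTop (𝓝 0) := by
  obtain ⟨δ, hδ0, hδ⟩ : ∃ δ > 0, ∀ᶠ k in atTop, δ < a k :=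
    ⟨_, half_pos ha, eventually_lt_of_lt_liminf (half_lt_self ha) (isBoundedUnder_of ⟨0, ha0⟩)⟩
  refine squeeze_zero' (g := fun k => (f k - f (k + 1)) / δ) (Eventually.of_forall hg)
    (hδ.mono fun k hk => (le_div_iff₀' hδ0).2 ?_) ?_
  · nlinarith [hle k, hg k]
  · simpa using (hf.sub (hf.comp (tendsto_add_atTop_nat 1))).div_const δ

end Fejer

section Splitting

variable {H : Type*} [NormedAddCommGroup H] [InnerProductSpace ℝ H]
  {P Pinv : H →L[ℝ] H} {A : H → Set H} {C : H → H} {β : ℝ}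

lemma neg_le_inner_of_cocoercive (hP : P.IsPositive) (hPinv : Pinv.IsPositive)
    (hPP : P.comp Pinv = .id ℝ H) (hβ0 : 0 ≤ β) (hC0 : β = 0 → ∀ x y : H, C x = C y)
    (hCpos : 0 < β → ∀ x y : H,
      (1 / β) * pnorm Pinv (C x - C y) ^ 2 ≤ ⟪C x - C y, x - y⟫_ℝ) (x y z : H) :
    -(β / 4) * pnorm P (x - y) ^ 2 ≤ ⟪C x - C z, y - z⟫_ℝ := by
  rcases hβ0.eq_or_lt with rfl | hβ
  · simp [hC0 rfl x z]
  have hco := hCpos hβ x z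
  have hyoung := hP.real_inner_le_inner_inv_add_inner hPP hβ (C x - C z) (x - y)
  rw [hPinv.pnorm_sq] at hco
  rw [hP.pnorm_sq]
  have hsplit : ⟪C x - C z, y - z⟫_ℝ = ⟪C x - C z, x - z⟫_ℝ - ⟪C x - C z, x - y⟫_ℝ := by
    rw [← inner_sub_right, sub_sub_sub_cancel_left]
  linarith

lemma mul_inner_inv_le_of_conservative_step {Sinv : H →L[ℝ] H} (hA : IsMonotoneOp A)
    (hP : P.IsPositive) (hPinv : Pinv.IsPositive) (hPP : P.comp Pinv = .id ℝ H)
    (hSinv : Sinv.IsPositive) (hβ0 : 0 ≤ β) (hC0 : β = 0 → ∀ x y : H, C x = C y)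
    (hCpos : 0 < β → ∀ x y : H,
      (1 / β) * pnorm Pinv (C x - C y) ^ 2 ≤ ⟪C x - C y, x - y⟫_ℝ)
    {z : H} (hz : -C z ∈ A z) {Mk : H → H} {μ : ℝ}
    (hμ : ∀ x y : H, x ≠ y → μ * pnorm Sinv (Mk x - Mk y) ^ 2 ≤
      ⟪Mk x - Mk y, x - y⟫_ℝ - β / 4 * pnorm P (x - y) ^ 2)
    {x y : H} (hmem : Mk x - C x - Mk y ∈ A y) :
    μ * ⟪Mk x - Mk y, Sinv (Mk x - Mk y)⟫_ℝ ≤ ⟪Mk x - Mk y, x - z⟫_ℝ := by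
  rcases eq_or_ne x y with rfl | hxy
  · simp
  have hmono := hA hmem hz
  rw [show Mk x - C x - Mk y - -C z = (Mk x - Mk y) - (C x - C z) by abel, inner_sub_left] at hmono
  have hco := neg_le_inner_of_cocoercive hP hPinv hPP hβ0 hC0 hCpos x y z
  have hstep := hμ x y hxy
  rw [hSinv.pnorm_sq] at hstep
  have hsplit : ⟪Mk x - Mk y, x - z⟫_ℝ = ⟪Mk x - Mk y, x - y⟫_ℝ + ⟪Mk x - Mk y, y - z⟫_ℝ := by
    rw [← inner_add_right, sub_add_sub_cancel]
  linarith

lemma exists_pos_cocoercive (hPinv : Pinv.IsPositive) (hβ0 : 0 ≤ β)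
    (hC0 : β = 0 → ∀ x y : H, C x = C y)
    (hCpos : 0 < β → ∀ x y : H,
      (1 / β) * pnorm Pinv (C x - C y) ^ 2 ≤ ⟪C x - C y, x - y⟫_ℝ) :
    ∃ γ > 0, ∀ x y : H, γ * ⟪C x - C y, Pinv (C x - C y)⟫_ℝ ≤ ⟪C x - C y, x - y⟫_ℝ := by
  rcases hβ0.eq_or_lt with rfl | hβ
  · exact ⟨1, one_pos, fun x y => by simp [hC0 rfl x y]⟩
  · exact ⟨1 / β, by positivity, fun x y => hPinv.pnorm_sq (C x - C y) ▸ hCpos hβ x y⟩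

lemma IsMaxMonotoneOp.mem_of_le_inner (hA : IsMaxMonotoneOp A) {x u : H} {c : ℝ} (hc : 0 ≤ c)
    (h : ∀ y v, v ∈ A y → c ≤ ⟪u - v, x - y⟫_ℝ) : u ∈ A x ∧ c ≤ 0 := by
  have hu : u ∈ A x := hA.2 x u fun y v hv => hc.trans (h y v hv)
  exact ⟨hu, by simpa using h x u hu⟩

end Splitting

section Demiclosed

variable {H : Type*} [NormedAddCommGroup H] [InnerProductSpace ℝ H]
  {Pinv : H →L[ℝ] H} {A : H → Set H} {C : H → H} {γ : ℝ} {ι : Type*}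

lemma le_inner_of_weakTendsto (hA : IsMonotoneOp A)
    (hC : ∀ x y : H, γ * ⟪C x - C y, Pinv (C x - C y)⟫_ℝ ≤ ⟪C x - C y, x - y⟫_ℝ)
    {l : Filter ι} [l.NeBot] {x xh u : ι → H} {p dL : H} {L : ℝ}
    (hx : WeakTendsto x l p) (hxb : IsBounded (range x))
    (hxh : Tendsto (fun i => x i - xh i) l (𝓝 0)) (hu : Tendsto u l (𝓝 0))
    (hmem : ∀ i, u i - C (x i) ∈ A (xh i))
    (hd : WeakTendsto (fun i => C (x i) - C p) l dL)
    (hdb : IsBounded (range fun i => C (x i) - C p))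
    (hr : Tendsto (fun i => ⟪C (x i) - C p, Pinv (C (x i) - C p)⟫_ℝ) l (𝓝 L))
    {y v : H} (hv : v ∈ A y) : γ * L ≤ ⟪-C p - dL - v, p - y⟫_ℝ := by
  have hineq (i : ι) : γ * ⟪C (x i) - C p, Pinv (C (x i) - C p)⟫_ℝ ≤
      ⟪u i, x i⟫_ℝ - ⟪u i, y⟫_ℝ - ⟪u i, x i - xh i⟫_ℝ + ⟪x i - xh i, C (x i) - C p⟫_ℝ
        - ⟪C (x i) - C p, p - y⟫_ℝ - ⟪xh i, C p + v⟫_ℝ + ⟪y, C p + v⟫_ℝ := by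
    have hmono := hA (hmem i) hv
    have hco := hC (x i) p
    simp only [inner_sub_left, inner_sub_right, inner_add_right, real_inner_comm] at hmono hco ⊢
    linarith
  have hlim := (((((((tendsto_inner_zero_of_isBounded hu hxb).sub
    (hu.inner (tendsto_const_nhds (x := y)))).sub (hu.inner hxh)).add
    (tendsto_inner_zero_of_isBounded hxh hdb)).sub (hd (p - y))).sub
    (hx.of_tendsto_sub hxh (C p + v))).add (tendsto_const_nhds (x := ⟪y, C p + v⟫_ℝ)))
  refine (le_of_tendsto_of_tendsto' (hr.const_mul γ) hlim hineq).trans_eq ?_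
  simp only [inner_zero_left, inner_sub_left, inner_sub_right, inner_add_right, inner_neg_left,
    real_inner_comm]
  ring

theorem neg_mem_of_weakTendsto [CompleteSpace H] (hA : IsMaxMonotoneOp A)
    (hPinv : IsStronglyPositive Pinv) (hγ : 0 < γ)
    (hC : ∀ x y : H, γ * ⟪C x - C y, Pinv (C x - C y)⟫_ℝ ≤ ⟪C x - C y, x - y⟫_ℝ)
    {U : Ultrafilter ι} {x xh u : ι → H} {p : H}
    (hx : WeakTendsto x U p) (hxb : IsBounded (range x))
    (hxh : Tendsto (fun i => x i - xh i) U (𝓝 0)) (hu : Tendsto u U (𝓝 0))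
    (hmem : ∀ i, u i - C (x i) ∈ A (xh i)) : -C p ∈ A p := by
  set d : ι → H := fun i => C (x i) - C p
  obtain ⟨c, hc, hcle⟩ := hPinv.2
  have hdb : IsBounded (range d) := by
    obtain ⟨B, hB⟩ := hxb.exists_norm_le
    refine isBounded_iff_forall_norm_le.2 ⟨(B + ‖p‖) / (γ * c), forall_mem_range.2 fun i => ?_⟩
    rw [le_div_iff₀' (by positivity)]
    calc γ * c * ‖d i‖ ≤ ‖x i - p‖ := norm_le_of_mul_sq_le_inner <| by
          rw [real_inner_comm, mul_assoc]
          exact (mul_le_mul_of_nonneg_left (hcle _) hγ.le).trans (hC (x i) p)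
      _ ≤ B + ‖p‖ := (norm_sub_le _ _).trans (by gcongr; exact hB _ (mem_range_self i))
  obtain ⟨dL, hdL⟩ := U.exists_weakTendsto hdb
  obtain ⟨L, hL⟩ := U.exists_tendsto_of_isBounded (f := fun i => ⟪d i, Pinv (d i)⟫_ℝ) <| by
    obtain ⟨B, hB⟩ := hdb.exists_norm_le
    refine isBounded_iff_forall_norm_le.2 ⟨B * (‖Pinv‖ * B), forall_mem_range.2 fun i => ?_⟩
    have hdi := hB _ (mem_range_self i)
    exact (norm_inner_le_norm _ _).trans (mul_le_mul hdi (Pinv.le_of_opNorm_le_of_le le_rfl hdi)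
      (norm_nonneg _) ((norm_nonneg _).trans hdi))
  have hLnonneg : 0 ≤ L := ge_of_tendsto' hL fun i => hPinv.1.inner_nonneg_right _
  -- testing against the graph of `A` puts `-C p - dL` in `A p` and forces `L = 0`
  obtain ⟨hmemL, hγL⟩ := hA.mem_of_le_inner (mul_nonneg hγ.le hLnonneg) fun y v hv =>
    le_inner_of_weakTendsto hA.1 hC hx hxb hxh hu hmem hdL hdb hL hv
  have hLzero : L = 0 := le_antisymm (nonpos_of_mul_nonpos_right hγL hγ) hLnonneg
  have hd : Tendsto d U (𝓝 0) := hPinv.tendsto_zero_of_tendsto_inner (hLzero ▸ hL)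
  rwa [hdL.eq_of_tendsto hd, sub_zero] at hmemL

end Demiclosed

theorem nofob_conservative_step_convergence_general
    {H : Type*} [NormedAddCommGroup H] [InnerProductSpace ℝ H] [CompleteSpace H]
    (P Pinv S Sinv : H →L[ℝ] H)
    (hPsa : IsSelfAdjoint P) (hSsa : IsSelfAdjoint S)
    (hPpos : ∃ c > 0, ∀ x : H, c * ‖x‖ ^ 2 ≤ inner ℝ x (P x))
    (hSpos : ∃ c > 0, ∀ x : H, c * ‖x‖ ^ 2 ≤ inner ℝ x (S x))
    (hPinv₁ : P.comp Pinv = ContinuousLinearMap.id ℝ H)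
    (hSinv₁ : S.comp Sinv = ContinuousLinearMap.id ℝ H)
    -- Assumption 1
    (A : H → Set H) (hA : IsMaxMonotoneOp A)
    (β : ℝ) (hβ0 : 0 ≤ β)
    (C : H → H)
    (hC0 : β = 0 → ∀ x y : H, C x = C y)
    (hCpos : 0 < β → ∀ x y : H,
      (1 / β) * pnorm Pinv (C x - C y) ^ 2 ≤ inner ℝ (C x - C y) (x - y))
    (hzer : ∃ x : H, -C x ∈ A x)
    -- kernels M_k
    (M : ℕ → H → H)
    (hMsm : ∀ k, ∀ x y : H, pnorm P (x - y) ^ 2 ≤ inner ℝ (M k x - M k y) (x - y))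
    -- relaxation parameters
    (θ : ℕ → ℝ) (hθ : ∀ k, 0 < θ k ∧ θ k < 2)
    (hθliminf : 0 < Filter.liminf (fun k => θ k * (2 - θ k)) atTop)
    -- conservative step-lengths
    (μh : ℕ → ℝ) (εμ : ℝ) (hεμ : 0 < εμ)
    (hμhLB : ∀ k, εμ ≤ μh k)
    (hμhGlobal : ∀ k, ∀ x y : H, x ≠ y →
      μh k * pnorm Sinv (M k x - M k y) ^ 2 ≤
        (inner ℝ (M k x - M k y) (x - y) : ℝ) - β / 4 * pnorm P (x - y) ^ 2)
    -- the algorithm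
    (x xh : ℕ → H)
    (hxh : ∀ k, M k (x k) - C (x k) - M k (xh k) ∈ A (xh k))
    (hupd : ∀ k, x (k + 1) = x k - (θ k * μh k) • Sinv (M k (x k) - M k (xh k))) :
    ∃ xbar : H, -C xbar ∈ A xbar ∧ WeakConvergesTo x xbar := by
  have hP := isStronglyPositive_of_isSelfAdjoint hPsa hPpos
  have hS := isStronglyPositive_of_isSelfAdjoint hSsa hSpos
  have hPinv := hP.of_comp_eq_id hPinv₁
  have hSinv := hS.of_comp_eq_id hSinv₁
  set w : ℕ → H := fun k => M k (x k) - M k (xh k)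
  set q : ℕ → ℝ := fun k => ⟪w k, Sinv (w k)⟫_ℝ
  set dS : H → ℕ → ℝ := fun z k => ⟪x k - z, S (x k - z)⟫_ℝ
  have hθ2 (k : ℕ) : 0 ≤ θ k * (2 - θ k) := mul_nonneg (hθ k).1.le (by linarith [(hθ k).2])
  have hμq0 (k : ℕ) : 0 ≤ μh k ^ 2 * q k := mul_nonneg (sq_nonneg _) (hSinv.1.inner_nonneg_right _)
  have hfejer {z : H} (hz : -C z ∈ A z) (k : ℕ) :
      dS z (k + 1) ≤ dS z k - θ k * (2 - θ k) * (μh k ^ 2 * q k) := by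
    have hx : x (k + 1) - z = (x k - z) - (θ k * μh k) • Sinv (w k) := by rw [hupd k]; abel
    simpa only [dS, hx, mul_assoc] using inner_map_sub_smul_inv_le hS.1 hSinv₁
      (mul_pos (hθ k).1 (hεμ.trans_le (hμhLB k))).le <|
      mul_inner_inv_le_of_conservative_step hA.1 hP.1 hPinv.1 hPinv₁ hSinv.1 hβ0 hC0 hCpos hz
        (hμhGlobal k) (hxh k)
  have hx : IsFejerMonotone S {z | -C z ∈ A z} x := fun z hz => antitone_nat_of_succ_le fun k =>
    (hfejer hz k).trans (sub_le_self _ (mul_nonneg (hθ2 k) (hμq0 k)))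
  obtain ⟨z₀, hz₀⟩ := hzer
  have hw : Tendsto w atTop (𝓝 0) := by
    obtain ⟨L, hL⟩ := hx.tendsto hS.1 hz₀
    have hμq := tendsto_zero_of_le_sub_mul hL hθliminf hθ2 hμq0 (hfejer hz₀)
    refine hSinv.tendsto_zero_of_tendsto_inner <|
      squeeze_zero (g := fun k => μh k ^ 2 * q k / εμ ^ 2) (fun k => hSinv.1.inner_nonneg_right _)
        (fun k => (le_div_iff₀' (pow_pos hεμ 2)).2 ?_) (by simpa using hμq.div_const (εμ ^ 2))
    exact mul_le_mul_of_nonneg_right (pow_le_pow_left₀ hεμ.le (hμhLB k) 2)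
      (hSinv.1.inner_nonneg_right _)
  have hxxh : Tendsto (fun k => x k - xh k) atTop (𝓝 0) :=
    hP.tendsto_zero_of_le_inner (fun k => hMsm k (x k) (xh k)) hw
  have hxb := hx.isBounded_range hS hz₀
  obtain ⟨γ, hγ, hCγ⟩ := exists_pos_cocoercive hPinv.1 hβ0 hC0 hCpos
  exact hx.exists_weakTendsto hS fun U hU => by
    obtain ⟨p, hp⟩ := U.exists_weakTendsto hxb
    refine ⟨p, neg_mem_of_weakTendsto hA hPinv hγ hCγ hp hxb (hxxh.mono_left hU)
      (hw.mono_left hU) fun k => ?_, hp⟩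
    simpa only [w, sub_right_comm] using hxh k

/-- convergence of NOFOB with conservative step (Algorithm 3). -/
theorem nofob_conservative_step_convergence
    {H : Type*} [NormedAddCommGroup H] [InnerProductSpace ℝ H] [CompleteSpace H]
    (P Pinv S Sinv : H →L[ℝ] H)
    (hPsa : IsSelfAdjoint P) (hSsa : IsSelfAdjoint S)
    (hPpos : ∃ c > 0, ∀ x : H, c * ‖x‖ ^ 2 ≤ inner ℝ x (P x))
    (hSpos : ∃ c > 0, ∀ x : H, c * ‖x‖ ^ 2 ≤ inner ℝ x (S x))
    (hPinv₁ : P.comp Pinv = ContinuousLinearMap.id ℝ H)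
    (hPinv₂ : Pinv.comp P = ContinuousLinearMap.id ℝ H)
    (hSinv₁ : S.comp Sinv = ContinuousLinearMap.id ℝ H)
    (hSinv₂ : Sinv.comp S = ContinuousLinearMap.id ℝ H)
    -- Assumption 1
    (A : H → Set H) (hA : IsMaxMonotoneOp A)
    (β : ℝ) (hβ0 : 0 ≤ β) (hβ4 : β < 4)
    (C : H → H)
    (hC0 : β = 0 → ∀ x y : H, C x = C y)
    (hCpos : 0 < β → ∀ x y : H,
      (1 / β) * pnorm Pinv (C x - C y) ^ 2 ≤ inner ℝ (C x - C y) (x - y))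
    (hzer : ∃ x : H, -C x ∈ A x)
    -- kernels M_k
    (M : ℕ → H → H) (L_M : ℝ)
    (hMsm : ∀ k, ∀ x y : H, pnorm P (x - y) ^ 2 ≤ inner ℝ (M k x - M k y) (x - y))
    (hMlip : ∀ k, ∀ x y : H, ‖M k x - M k y‖ ≤ L_M * ‖x - y‖)
    -- relaxation parameters
    (θ : ℕ → ℝ) (hθ : ∀ k, 0 < θ k ∧ θ k < 2)
    (hθliminf : 0 < Filter.liminf (fun k => θ k * (2 - θ k)) atTop)
    -- conservative step-lengths
    (μh : ℕ → ℝ) (εμ : ℝ) (hεμ : 0 < εμ)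
    (hμhLB : ∀ k, εμ ≤ μh k)
    (hμhGlobal : ∀ k, ∀ x y : H, x ≠ y →
      μh k * pnorm Sinv (M k x - M k y) ^ 2 ≤
        (inner ℝ (M k x - M k y) (x - y) : ℝ) - β / 4 * pnorm P (x - y) ^ 2)
    -- the algorithm
    (x xh : ℕ → H)
    (hxh : ∀ k, M k (x k) - C (x k) - M k (xh k) ∈ A (xh k))
    (hupd : ∀ k, x (k + 1) = x k - (θ k * μh k) • Sinv (M k (x k) - M k (xh k))) :
    ∃ xbar : H, -C xbar ∈ A xbar ∧ WeakConvergesTo x xbar :=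
  nofob_conservative_step_convergence_general P Pinv S Sinv hPsa hSsa hPpos hSpos hPinv₁ hSinv₁ A hA
    β hβ0 C hC0 hCpos hzer M hMsm θ hθ hθliminf μh εμ hεμ hμhLB hμhGlobal x xh hxh hupd
end

section
/- (Linear convergence of NOFOB under metric subregularity.) Suppose H is a finite-dimensional real Hilbert space, Assumption 1 holds, each M_k : H → H is 1-strongly monotone w.r.t. ‖·‖_P and L_M-Lipschitz continuous w.r.t. ‖·‖, S is a bounded self-adjoint strongly positive linear operator, and θ_k ∈ [ε_θ, 2 − ε_θ] for some ε_θ ∈ (0, 1). Let Z := zer(A + C) and assume the uniform metric subregularity condition: there exist κ ≥ 0, ν > 0 and an open set U ⊇ Z such that dist_S(x, Z) ≤ κ‖v‖_S whenever x ∈ U, v − Cx ∈ Ax and ‖v‖_S < ν. Let (x_k), (x̂_k) be generated by NOFOB: x̂_k is the unique point with M_k x_k − C x_k − M_k x̂_k ∈ A x̂_k, H_k := {z : ⟨M_k x_k − M_k x̂_k, z − x̂_k⟩ ≤ (β/4)‖x_k − x̂_k‖_P²}, and x_{k+1} := (1 − θ_k)x_k + θ_k Π_{H_k}^S(x_k).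 Then there exist K₀ ∈ ℕ and c ∈ [0, 1) such that dist_S(x_{k+1}, Z) ≤ c·dist_S(x_k, Z) for all k ≥ K₀ (local Q-linear convergence), and there exist x̄ ∈ Z and R ≥ 0 such that ‖x_k − x̄‖_S ≤ R·c^k for all k ≥ K₀ (local R-linear strong convergence to a solution). -/
/-!
Monotonicity of `A` and cocoercivity of `C` (through Young's inequality, which is where the
margin `β/4` comes from) put `zer (A + C)` inside every halfspace `H_k`, so the relaxed
`S`-projection step is Fejér monotone with respect to the solution set:
`dist_S(x_{k+1}, Z)² + ε_θ ‖p_k - x_k‖_S² ≤ dist_S(x_k, Z)²`. Hence `p_k - x_k → 0`, by strong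
monotonicity of `M_k` also `x_k - x̂_k → 0`, and the residual `v_k ∈ (A + C) x̂_k` tends to `0`.
In finite dimensions the closed graph of `A` then forces `x̂_k` eventually into the neighbourhood
`U` of `Z`, where metric subregularity yields the error bound `dist_S(x_k, Z) ≤ E ‖p_k - x_k‖_S`.
Together with the Fejér inequality this makes `dist_S(·, Z)` contract Q-linearly; as the steps
`‖x_{k+1} - x_k‖_S` are bounded by multiples of `dist_S(x_k, Z)`, the iterates are R-linearly
Cauchy, and their limit lies in the closed set `Z`.
-/

open Filter Topology

/-- The `‖·‖_S`-distance from a point to a set. -/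
noncomputable def distS {H : Type*} [NormedAddCommGroup H] [InnerProductSpace ℝ H]
    (S : H →L[ℝ] H) (x : H) (Ω : Set H) : ℝ := ⨅ y : Ω, pnorm S (x - (y : H))

namespace ContinuousLinearMap

variable {H : Type*} [NormedAddCommGroup H] [InnerProductSpace ℝ H] {S : H →L[ℝ] H}

theorem isPositive_of_mul_norm_sq_le [CompleteSpace H] {T : H →L[ℝ] H} (hT : IsSelfAdjoint T)
    {c : ℝ} (hc : 0 ≤ c) (h : ∀ x : H, c * ‖x‖ ^ 2 ≤ inner ℝ x (T x)) : T.IsPositive :=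
  T.isPositive_iff.2 ⟨hT.isSymmetric, fun x => by
    rw [real_inner_comm]; exact (by positivity : 0 ≤ c * ‖x‖ ^ 2).trans (h x)⟩

/-- `⟪x, S y⟫` as a semi-inner product, through which `‖·‖_S` inherits Cauchy–Schwarz and the
triangle inequality; it is only installed locally, since `H` already carries a norm. -/
abbrev IsPositive.preInnerProductCore (hS : S.IsPositive) : PreInnerProductSpace.Core ℝ H where
  inner x y := inner ℝ x (S y)
  conj_inner_symm x y := by
    rw [conj_trivial, ← hS.inner_left_eq_inner_right, real_inner_comm]
  re_inner_nonneg x := hS.inner_nonneg_right x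
  add_left x y z := inner_add_left _ _ _
  smul_left x y r := real_inner_smul_left _ _ _

theorem IsPositive.of_rightInverse {P Q : H →L[ℝ] H} (hP : P.IsPositive)
    (hPQ : Function.RightInverse Q P) : Q.IsPositive := by
  refine (Q.isPositive_iff).2 ⟨fun u v => ?_, fun u => ?_⟩
  · change inner ℝ (Q u) v = inner ℝ u (Q v)
    conv_lhs => rw [← hPQ v]
    conv_rhs => rw [← hPQ u]
    rw [hP.inner_left_eq_inner_right, real_inner_comm]
  · have := hP.inner_nonneg_right (Q u)
    rwa [hPQ u] at this

end ContinuousLinearMap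

section Pnorm

variable {H : Type*} [NormedAddCommGroup H] [InnerProductSpace ℝ H] {S : H →L[ℝ] H}

theorem pnorm_nonneg (x : H) : 0 ≤ pnorm S x := Real.sqrt_nonneg _

theorem pnorm_sq (hS : S.IsPositive) (x : H) : pnorm S x ^ 2 = inner ℝ x (S x) :=
  Real.sq_sqrt (hS.inner_nonneg_right x)

theorem real_inner_map_le_pnorm_mul_pnorm (hS : S.IsPositive) (u v : H) :
    inner ℝ u (S v) ≤ pnorm S u * pnorm S v := by
  let := hS.preInnerProductCore
  exact (Real.le_norm_self _).trans (InnerProductSpace.Core.norm_inner_le_norm (𝕜 := ℝ) u v)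

theorem pnorm_add_le (hS : S.IsPositive) (u v : H) :
    pnorm S (u + v) ≤ pnorm S u + pnorm S v := by
  let := hS.preInnerProductCore
  let := InnerProductSpace.Core.toSeminormedAddCommGroup (𝕜 := ℝ) (F := H)
  exact norm_add_le u v

theorem pnorm_sub_le_pnorm_sub_add_pnorm_sub (hS : S.IsPositive) (u v w : H) :
    pnorm S (u - w) ≤ pnorm S (u - v) + pnorm S (v - w) := by
  simpa using pnorm_add_le hS (u - v) (v - w)

theorem pnorm_smul (t : ℝ) (u : H) : pnorm S (t • u) = |t| * pnorm S u := by
  rw [pnorm, pnorm, map_smul, real_inner_smul_left, real_inner_smul_right, ← mul_assoc,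
    ← sq, Real.sqrt_mul (sq_nonneg t), Real.sqrt_sq_eq_abs]

theorem pnorm_neg (u : H) : pnorm S (-u) = pnorm S u := by
  simpa using pnorm_smul (S := S) (-1) u

theorem pnorm_sub_comm (u v : H) : pnorm S (u - v) = pnorm S (v - u) := by
  rw [← neg_sub, pnorm_neg]

theorem pnorm_add_sq (hS : S.IsPositive) (u v : H) :
    pnorm S (u + v) ^ 2 = pnorm S u ^ 2 + 2 * inner ℝ u (S v) + pnorm S v ^ 2 := by
  simp only [pnorm_sq hS, map_add, inner_add_left, inner_add_right,
    ← hS.inner_left_eq_inner_right v u, real_inner_comm (S v) u]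
  ring

theorem pnorm_le_sqrt_opNorm_mul_norm (x : H) : pnorm S x ≤ √‖S‖ * ‖x‖ := by
  rw [← Real.sqrt_sq (norm_nonneg x), ← Real.sqrt_mul (norm_nonneg S)]
  refine Real.sqrt_le_sqrt ((real_inner_le_norm _ _).trans ?_)
  nlinarith [S.le_opNorm x, norm_nonneg x]

theorem sqrt_mul_norm_le_pnorm {c : ℝ} (hc : ∀ x : H, c * ‖x‖ ^ 2 ≤ inner ℝ x (S x)) (x : H) :
    √c * ‖x‖ ≤ pnorm S x := by
  rw [← Real.sqrt_sq (norm_nonneg x), ← Real.sqrt_mul' _ (sq_nonneg _)]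
  exact Real.sqrt_le_sqrt (hc x)

theorem continuous_pnorm : Continuous (pnorm S) :=
  Real.continuous_sqrt.comp (continuous_id.inner S.continuous)

end Pnorm

section DistS

variable {H : Type*} [NormedAddCommGroup H] [InnerProductSpace ℝ H] {S : H →L[ℝ] H} {Ω : Set H}

theorem distS_nonneg (x : H) : 0 ≤ distS S x Ω :=
  Real.iInf_nonneg fun _ => pnorm_nonneg _

theorem distS_le_pnorm_sub {z : H} (hz : z ∈ Ω) (x : H) : distS S x Ω ≤ pnorm S (x - z) :=
  ciInf_le ⟨0, by rintro _ ⟨w, rfl⟩; exact pnorm_nonneg _⟩ (⟨z, hz⟩ : Ω)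

theorem le_distS (hΩ : Ω.Nonempty) {a : ℝ} {x : H} (h : ∀ z ∈ Ω, a ≤ pnorm S (x - z)) :
    a ≤ distS S x Ω :=
  have := hΩ.to_subtype
  le_ciInf fun z => h z z.2

theorem distS_le_pnorm_sub_add_distS (hS : S.IsPositive) (hΩ : Ω.Nonempty) (x y : H) :
    distS S x Ω ≤ pnorm S (x - y) + distS S y Ω := by
  rw [← sub_le_iff_le_add']
  refine le_distS hΩ fun z hz => ?_
  have := pnorm_sub_le_pnorm_sub_add_pnorm_sub hS x y z
  linarith [distS_le_pnorm_sub (S := S) hz x]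

theorem distS_sq_add_le_of_forall (hΩ : Ω.Nonempty) {x y : H} {m : ℝ} (hm : 0 ≤ m)
    (h : ∀ z ∈ Ω, pnorm S (y - z) ^ 2 + m ≤ pnorm S (x - z) ^ 2) :
    distS S y Ω ^ 2 + m ≤ distS S x Ω ^ 2 := by
  have hsqrt : √(distS S y Ω ^ 2 + m) ≤ distS S x Ω := by
    refine le_distS hΩ fun z hz => ?_
    have hyz := pow_le_pow_left₀ (distS_nonneg y) (distS_le_pnorm_sub (S := S) hz y) 2
    exact (Real.sqrt_le_sqrt (by linarith [h z hz])).trans_eq (Real.sqrt_sq (pnorm_nonneg _))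
  calc distS S y Ω ^ 2 + m = √(distS S y Ω ^ 2 + m) ^ 2 := (Real.sq_sqrt (by positivity)).symm
    _ ≤ distS S x Ω ^ 2 := pow_le_pow_left₀ (Real.sqrt_nonneg _) hsqrt 2

theorem sqrt_mul_infDist_le_distS {c : ℝ} (hc : ∀ x : H, c * ‖x‖ ^ 2 ≤ inner ℝ x (S x))
    (hΩ : Ω.Nonempty) (x : H) : √c * Metric.infDist x Ω ≤ distS S x Ω := by
  refine le_distS hΩ fun z hz => ?_
  calc √c * Metric.infDist x Ω ≤ √c * ‖x - z‖ := by
        gcongr; exact dist_eq_norm x z ▸ Metric.infDist_le_dist_of_mem hz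
    _ ≤ pnorm S (x - z) := sqrt_mul_norm_le_pnorm hc _

end DistS

section Operators

variable {H : Type*} [NormedAddCommGroup H] [InnerProductSpace ℝ H] {P Q : H →L[ℝ] H}

theorem real_inner_le_pnorm_mul_pnorm_of_leftInverse (hQ : Q.IsPositive)
    (hQP : Function.LeftInverse Q P) (u w : H) :
    inner ℝ u w ≤ pnorm Q u * pnorm P w := by
  have hdual : pnorm Q (P w) = pnorm P w := by rw [pnorm, pnorm, hQP, real_inner_comm]
  simpa only [hQP w, hdual] using real_inner_map_le_pnorm_mul_pnorm hQ u (P w)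

theorem norm_le_sqrt_opNorm_mul_pnorm_of_leftInverse (hQ : Q.IsPositive)
    (hQP : Function.LeftInverse Q P) (u : H) : ‖u‖ ≤ √‖P‖ * pnorm Q u := by
  rcases (norm_nonneg u).eq_or_lt with hu | hu
  · rw [← hu]; exact mul_nonneg (Real.sqrt_nonneg _) (pnorm_nonneg u)
  refine le_of_mul_le_mul_right ?_ hu
  calc ‖u‖ * ‖u‖ = inner ℝ u u := (real_inner_self_eq_norm_mul_norm u).symm
    _ ≤ pnorm Q u * pnorm P u := real_inner_le_pnorm_mul_pnorm_of_leftInverse hQ hQP u u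
    _ ≤ pnorm Q u * (√‖P‖ * ‖u‖) := by
        gcongr; exacts [pnorm_nonneg u, pnorm_le_sqrt_opNorm_mul_norm u]
    _ = √‖P‖ * pnorm Q u * ‖u‖ := by ring

/-- `C` is `1/β`-cocoercive with respect to `‖·‖_P`, where `Q` plays the role of `P⁻¹`;
for `β = 0` this means that `C` is constant. -/
def IsCocoercive (Q : H →L[ℝ] H) (β : ℝ) (C : H → H) : Prop :=
  (β = 0 → ∀ x y, C x = C y) ∧
    (0 < β → ∀ x y, 1 / β * pnorm Q (C x - C y) ^ 2 ≤ inner ℝ (C x - C y) (x - y))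

namespace IsCocoercive

variable {β : ℝ} {C : H → H}

theorem pnorm_sub_le (hC : IsCocoercive Q β C) (hβ : 0 ≤ β) (hQ : Q.IsPositive)
    (hQP : Function.LeftInverse Q P) (x y : H) :
    pnorm Q (C x - C y) ≤ β * pnorm P (x - y) := by
  rcases hβ.eq_or_lt with hβ | hβ
  · simp [hC.1 hβ.symm x y, pnorm, ← hβ]
  have hcs := real_inner_le_pnorm_mul_pnorm_of_leftInverse hQ hQP (C x - C y) (x - y)
  have hco := hC.2 hβ x y
  rw [div_mul_eq_mul_div, one_mul, div_le_iff₀ hβ] at hco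
  rcases (pnorm_nonneg (S := Q) (C x - C y)).eq_or_lt with ha | ha
  · rw [← ha]; exact mul_nonneg hβ.le (pnorm_nonneg _)
  refine le_of_mul_le_mul_right ?_ ha
  nlinarith [mul_le_mul_of_nonneg_right hcs hβ.le]

theorem norm_sub_le (hC : IsCocoercive Q β C) (hβ : 0 ≤ β) (hQ : Q.IsPositive)
    (hQP : Function.LeftInverse Q P) (x y : H) :
    ‖C x - C y‖ ≤ β * ‖P‖ * ‖x - y‖ := by
  calc ‖C x - C y‖ ≤ √‖P‖ * pnorm Q (C x - C y) :=
        norm_le_sqrt_opNorm_mul_pnorm_of_leftInverse hQ hQP _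
    _ ≤ √‖P‖ * (β * (√‖P‖ * ‖x - y‖)) := by
        gcongr
        exact (hC.pnorm_sub_le hβ hQ hQP x y).trans
          (mul_le_mul_of_nonneg_left (pnorm_le_sqrt_opNorm_mul_norm _) hβ)
    _ = β * (√‖P‖ * √‖P‖) * ‖x - y‖ := by ring
    _ = β * ‖P‖ * ‖x - y‖ := by rw [Real.mul_self_sqrt (norm_nonneg P)]

theorem continuous (hC : IsCocoercive Q β C) (hβ : 0 ≤ β) (hQ : Q.IsPositive)
    (hQP : Function.LeftInverse Q P) : Continuous C :=
  (LipschitzWith.of_dist_le_mul (K := ⟨β * ‖P‖, by positivity⟩) fun x y => by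
    rw [dist_eq_norm, dist_eq_norm]; exact hC.norm_sub_le hβ hQ hQP x y).continuous

theorem inner_sub_le (hC : IsCocoercive Q β C) (hβ : 0 ≤ β) (hQ : Q.IsPositive)
    (hQP : Function.LeftInverse Q P) (x y w : H) :
    inner ℝ (C x - C y) (y - w) ≤ β / 4 * pnorm P (x - w) ^ 2 := by
  rcases hβ.eq_or_lt with hβ | hβ
  · simp [hC.1 hβ.symm x y, ← hβ]
  have hsplit : inner ℝ (C x - C y) (y - w) =
      inner ℝ (C x - C y) (x - w) - inner ℝ (C x - C y) (x - y) := by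
    rw [← inner_sub_right, sub_sub_sub_cancel_left]
  have hcs := real_inner_le_pnorm_mul_pnorm_of_leftInverse hQ hQP (C x - C y) (x - w)
  have hco := hC.2 hβ x y
  set a := pnorm Q (C x - C y)
  set b := pnorm P (x - w)
  have hyoung : a * b ≤ 1 / β * a ^ 2 + β / 4 * b ^ 2 := by
    have : 0 ≤ (1 / β) * (a - β / 2 * b) ^ 2 := by positivity
    have hβ' : β ≠ 0 := hβ.ne'
    field_simp at this ⊢
    nlinarith
  linarith

end IsCocoercive

end Operators

section MonotoneOperators

variable {H : Type*} [NormedAddCommGroup H] [InnerProductSpace ℝ H] {A : H → Set H}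

theorem IsMaxMonotoneOp.mem_of_tendsto (hA : IsMaxMonotoneOp A) {ι : Type*} {l : Filter ι}
    [l.NeBot] {w u : ι → H} {a b : H} (hmem : ∀ i, u i ∈ A (w i))
    (hw : Tendsto w l (𝓝 a)) (hu : Tendsto u l (𝓝 b)) : b ∈ A a :=
  hA.2 a b fun _ _ hv =>
    ge_of_tendsto ((hu.sub tendsto_const_nhds).inner (hw.sub tendsto_const_nhds))
      (Eventually.of_forall fun i => hA.1 (hmem i) hv)

theorem IsMaxMonotoneOp.isClosed_setOf_neg_mem (hA : IsMaxMonotoneOp A) {C : H → H}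
    (hC : Continuous C) : IsClosed {x | -C x ∈ A x} := by
  refine isSeqClosed_iff_isClosed.mp fun w a hw hwa => ?_
  exact hA.mem_of_tendsto hw hwa ((hC.tendsto a).comp hwa).neg

theorem IsMaxMonotoneOp.eventually_mem_of_tendsto_zero (hA : IsMaxMonotoneOp A) {C : H → H}
    (hC : Continuous C) {U K : Set H} (hU : IsOpen U) (hZU : {x | -C x ∈ A x} ⊆ U)
    (hK : IsCompact K) {y v : ℕ → H} (hyK : ∀ᶠ k in atTop, y k ∈ K)
    (hv : Tendsto v atTop (𝓝 0)) (hmem : ∀ k, v k - C (y k) ∈ A (y k)) :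
    ∀ᶠ k in atTop, y k ∈ U := by
  by_contra hcon
  obtain ⟨φ, hφ, hφK⟩ := extraction_of_frequently_atTop
    ((not_eventually.mp hcon).and_eventually hyK |>.mono fun _ h => And.comm.mp h)
  obtain ⟨a, haK, ψ, hψ, hlim⟩ := (hK.inter_right hU.isClosed_compl).tendsto_subseq hφK
  have hχ : Tendsto (φ ∘ ψ) atTop atTop := (hφ.comp hψ).tendsto_atTop
  have ha : -C a ∈ A a := by
    refine hA.mem_of_tendsto (fun n => hmem ((φ ∘ ψ) n)) hlim ?_
    simpa using (hv.comp hχ).sub ((hC.tendsto a).comp hlim)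
  exact haK.2 (hZU ha)

end MonotoneOperators

section Projection

variable {H : Type*} [NormedAddCommGroup H] [InnerProductSpace ℝ H] {S : H →L[ℝ] H}
  {K : Set H} {x p z : H}

/-- `p = Π^S_K(x)` in the paper's notation. -/
def IsPnormProj (S : H →L[ℝ] H) (K : Set H) (x p : H) : Prop :=
  p ∈ K ∧ ∀ z ∈ K, pnorm S (p - x) ≤ pnorm S (z - x)

theorem IsPnormProj.inner_nonneg (hS : S.IsPositive) (hK : Convex ℝ K)
    (hp : IsPnormProj S K x p) (hz : z ∈ K) : 0 ≤ inner ℝ (p - x) (S (z - p)) := by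
  set B := inner ℝ (p - x) (S (z - p))
  have hseg : ∀ t ∈ Set.Ioc (0 : ℝ) 1, 0 ≤ 2 * B + t * pnorm S (z - p) ^ 2 := by
    rintro t ⟨ht0, ht1⟩
    have hmin := pow_le_pow_left₀ (pnorm_nonneg _)
      (hp.2 _ (hK.add_smul_sub_mem hp.1 hz ⟨ht0.le, ht1⟩)) 2
    rw [add_sub_right_comm, pnorm_add_sq hS, pnorm_smul, map_smul, inner_smul_right, mul_pow,
      sq_abs] at hmin
    nlinarith
  have hlim : Tendsto (fun t => 2 * B + t * pnorm S (z - p) ^ 2) (𝓝[>] 0)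
      (𝓝 (2 * B + 0 * pnorm S (z - p) ^ 2)) :=
    ((by fun_prop : Continuous fun t : ℝ => 2 * B + t * pnorm S (z - p) ^ 2).tendsto 0).mono_left
      nhdsWithin_le_nhds
  have := ge_of_tendsto hlim (eventually_of_mem (Ioc_mem_nhdsGT one_pos) hseg)
  linarith

theorem IsPnormProj.pnorm_relax_sub_sq_add_le (hS : S.IsPositive) (hK : Convex ℝ K)
    (hp : IsPnormProj S K x p) (hz : z ∈ K) {θ : ℝ} (hθ : 0 ≤ θ) :
    pnorm S ((1 - θ) • x + θ • p - z) ^ 2 + θ * (2 - θ) * pnorm S (p - x) ^ 2 ≤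
      pnorm S (x - z) ^ 2 := by
  have hvi := hp.inner_nonneg hS hK hz
  rw [show z - p = -((x - z) + (p - x)) by abel, map_neg, inner_neg_right, map_add,
    inner_add_right, ← hS.inner_left_eq_inner_right, real_inner_comm, ← pnorm_sq hS] at hvi
  rw [show (1 - θ) • x + θ • p - z = (x - z) + θ • (p - x) by module, pnorm_add_sq hS,
    pnorm_smul, map_smul, inner_smul_right, mul_pow, sq_abs]
  nlinarith

end Projection

section Sequences

theorem tendsto_zero_of_sq_add_le {a r : ℕ → ℝ} {ε : ℝ} (hε : 0 < ε) (hr : ∀ k, 0 ≤ r k)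
    (h : ∀ k, a (k + 1) ^ 2 + ε * r k ^ 2 ≤ a k ^ 2) : Tendsto r atTop (𝓝 0) := by
  have hsum : ∀ n, ∑ k ∈ Finset.range n, ε * r k ^ 2 + a n ^ 2 ≤ a 0 ^ 2 := by
    intro n
    induction n with
    | zero => simp
    | succ n ih => rw [Finset.sum_range_succ]; linarith [h n]
  have hs : Summable fun k => ε * r k ^ 2 :=
    summable_of_sum_range_le (c := a 0 ^ 2) (fun k => by positivity) fun n => by
      nlinarith [hsum n]
  simpa [hε.ne', Real.sqrt_sq (hr _)] using (hs.tendsto_atTop_zero.div_const ε).sqrt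

theorem exists_lt_one_le_mul_of_sq_add_le {d r : ℕ → ℝ} {ε E : ℝ} {K : ℕ} (hε : 0 < ε)
    (hd : ∀ k, 0 ≤ d k) (h : ∀ k, d (k + 1) ^ 2 + ε * r k ^ 2 ≤ d k ^ 2)
    (herr : ∀ k ≥ K, d k ≤ E * r k) :
    ∃ c, 0 < c ∧ c < 1 ∧ ∀ k ≥ K, d (k + 1) ≤ c * d k := by
  -- the factor `2` keeps `c > 0` even when `E = 0`
  set γ := ε / (2 * (E ^ 2 + ε))
  have hγ0 : 0 < γ := by positivity
  have hγE : γ * E ^ 2 ≤ ε := by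
    rw [div_mul_eq_mul_div, div_le_iff₀ (by positivity)]; nlinarith [sq_nonneg E]
  have hγ1 : γ < 1 := by
    rw [div_lt_one (by positivity)]; nlinarith [sq_nonneg E]
  refine ⟨√(1 - γ), Real.sqrt_pos.2 (by linarith),
    (Real.sqrt_lt_sqrt (by linarith) (by linarith : 1 - γ < 1)).trans_eq Real.sqrt_one,
    fun k hk => ?_⟩
  have hdE : d k ^ 2 ≤ E ^ 2 * r k ^ 2 := by
    rw [← mul_pow]; exact pow_le_pow_left₀ (hd k) (herr k hk) 2
  have hsq : d (k + 1) ^ 2 ≤ (1 - γ) * d k ^ 2 := by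
    nlinarith [h k, mul_le_mul_of_nonneg_left hdE hγ0.le, sq_nonneg (r k)]
  rw [← Real.sqrt_sq (hd (k + 1)), ← Real.sqrt_sq (hd k), ← Real.sqrt_mul (by linarith)]
  exact Real.sqrt_le_sqrt hsq

theorem le_geometric_of_le_mul {d : ℕ → ℝ} {c : ℝ} {K : ℕ} (hc : 0 < c)
    (h : ∀ k ≥ K, d (k + 1) ≤ c * d k) : ∀ k ≥ K, d k ≤ d K / c ^ K * c ^ k := by
  intro k hk
  induction k, hk using Nat.le_induction with
  | base => rw [div_mul_cancel₀ _ (pow_pos hc K).ne']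
  | succ k hk ih =>
    calc d (k + 1) ≤ c * d k := h k hk
      _ ≤ c * (d K / c ^ K * c ^ k) := by gcongr
      _ = d K / c ^ K * c ^ (k + 1) := by ring

theorem exists_tendsto_norm_sub_le_geometric {E : Type*} [NormedAddCommGroup E] [CompleteSpace E]
    {x : ℕ → E} {G c : ℝ} {K : ℕ} (hc : c < 1) (h : ∀ k ≥ K, ‖x k - x (k + 1)‖ ≤ G * c ^ k) :
    ∃ xbar, Tendsto x atTop (𝓝 xbar) ∧ ∀ k ≥ K, ‖x k - xbar‖ ≤ G * c ^ k / (1 - c) := by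
  have hshift : ∀ n, dist (x (n + K)) (x (n + 1 + K)) ≤ G * c ^ K * c ^ n := fun n => by
    rw [dist_eq_norm, add_right_comm, mul_assoc, ← pow_add, add_comm K]
    exact h _ (Nat.le_add_left K n)
  obtain ⟨xbar, hlim⟩ := cauchySeq_tendsto_of_complete (cauchySeq_of_le_geometric c _ hc hshift)
  refine ⟨xbar, (tendsto_add_atTop_iff_nat K).mp hlim, fun k hk => ?_⟩
  have := dist_le_of_le_geometric_of_tendsto c _ hc hshift hlim (k - K)
  rwa [Nat.sub_add_cancel hk, dist_eq_norm, mul_assoc, ← pow_add, Nat.add_sub_cancel' hk] at this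

end Sequences

section NOFOB

variable {H : Type*} [NormedAddCommGroup H] [InnerProductSpace ℝ H]

/-- The halfspace `H_k` of NOFOB for the kernel `T = M_k`, `x = x_k` and `xh = x̂_k`. -/
def nofobHalfspace (P : H →L[ℝ] H) (β : ℝ) (T : H → H) (x xh : H) : Set H :=
  {z | inner ℝ (T x - T xh) (z - xh) ≤ β / 4 * pnorm P (x - xh) ^ 2}

variable {P Q S : H →L[ℝ] H} {β : ℝ} {T C : H → H} {A : H → Set H} {x xh p : H}

theorem convex_nofobHalfspace : Convex ℝ (nofobHalfspace P β T x xh) := by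
  have : nofobHalfspace P β T x xh = {z | innerₛₗ ℝ (T x - T xh) z ≤
      β / 4 * pnorm P (x - xh) ^ 2 + inner ℝ (T x - T xh) xh} := by
    ext z
    simp only [nofobHalfspace, Set.mem_ofPred_eq, coe_innerₛₗ_apply, inner_sub_right,
      sub_le_iff_le_add]
  rw [this]
  exact convex_halfSpace_le (innerₛₗ ℝ _).isLinear _

theorem setOf_neg_mem_subset_nofobHalfspace (hA : IsMonotoneOp A) (hC : IsCocoercive Q β C)
    (hβ : 0 ≤ β) (hQ : Q.IsPositive) (hQP : Function.LeftInverse Q P)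
    (hxh : T x - C x - T xh ∈ A xh) : {z | -C z ∈ A z} ⊆ nofobHalfspace P β T x xh := by
  intro z hz
  have hmono := hA hxh hz
  have hsplit : inner ℝ (T x - C x - T xh - -C z) (xh - z) =
      inner ℝ (C x - C z) (z - xh) - inner ℝ (T x - T xh) (z - xh) := by
    simp only [inner_sub_left, inner_sub_right, inner_neg_left]; ring
  have := hC.inner_sub_le hβ hQ hQP x z xh
  show inner ℝ (T x - T xh) (z - xh) ≤ β / 4 * pnorm P (x - xh) ^ 2
  linarith

theorem mul_norm_sub_le_mul_pnorm_of_mem_nofobHalfspace (hP : P.IsPositive) {cP cS L : ℝ}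
    (hcP : ∀ u : H, cP * ‖u‖ ^ 2 ≤ inner ℝ u (P u))
    (hcS : ∀ u : H, cS * ‖u‖ ^ 2 ≤ inner ℝ u (S u)) (hβ4 : β ≤ 4) (hL : 0 ≤ L)
    (hTsm : pnorm P (x - xh) ^ 2 ≤ inner ℝ (T x - T xh) (x - xh))
    (hTlip : ‖T x - T xh‖ ≤ L * ‖x - xh‖) (hp : p ∈ nofobHalfspace P β T x xh) :
    (1 - β / 4) * cP * √cS * ‖x - xh‖ ≤ L * pnorm S (p - x) := by
  have hdescent : (1 - β / 4) * cP * ‖x - xh‖ ^ 2 ≤ L * ‖x - xh‖ * ‖x - p‖ := by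
    have hsplit : inner ℝ (T x - T xh) (x - p) =
        inner ℝ (T x - T xh) (x - xh) - inner ℝ (T x - T xh) (p - xh) := by
      rw [← inner_sub_right, sub_sub_sub_cancel_right]
    have hP' : cP * ‖x - xh‖ ^ 2 ≤ pnorm P (x - xh) ^ 2 := pnorm_sq hP (x - xh) ▸ hcP _
    calc (1 - β / 4) * cP * ‖x - xh‖ ^ 2 ≤ (1 - β / 4) * pnorm P (x - xh) ^ 2 := by
          rw [mul_assoc]; gcongr; linarith
      _ ≤ inner ℝ (T x - T xh) (x - p) := by rw [hsplit]; linarith [hp.out]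
      _ ≤ ‖T x - T xh‖ * ‖x - p‖ := real_inner_le_norm _ _
      _ ≤ L * ‖x - xh‖ * ‖x - p‖ := by gcongr
  have hS' : √cS * ‖x - p‖ ≤ pnorm S (p - x) :=
    pnorm_sub_comm (S := S) p x ▸ sqrt_mul_norm_le_pnorm hcS _
  rcases (norm_nonneg (x - xh)).eq_or_lt with hg | hg
  · rw [← hg, mul_zero]; exact mul_nonneg hL (pnorm_nonneg _)
  refine le_of_mul_le_mul_right ?_ hg
  nlinarith [mul_le_mul_of_nonneg_left hdescent (Real.sqrt_nonneg cS),
    mul_le_mul_of_nonneg_left hS' (mul_nonneg hL hg.le)]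

end NOFOB

theorem nofob_fejer {H : Type*} [NormedAddCommGroup H] [InnerProductSpace ℝ H]
    {P Q S : H →L[ℝ] H} {A : H → Set H} {β : ℝ} {C : H → H} (hS : S.IsPositive)
    (hA : IsMonotoneOp A) (hC : IsCocoercive Q β C) (hβ : 0 ≤ β) (hQ : Q.IsPositive)
    (hQP : Function.LeftInverse Q P) {M : ℕ → H → H} {x xh p : ℕ → H} {θ : ℕ → ℝ} {ε : ℝ}
    (hε0 : 0 ≤ ε) (hε1 : ε ≤ 1) (hθ : ∀ k, ε ≤ θ k ∧ θ k ≤ 2 - ε)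
    (hxh : ∀ k, M k (x k) - C (x k) - M k (xh k) ∈ A (xh k))
    (hp : ∀ k, IsPnormProj S (nofobHalfspace P β (M k) (x k) (xh k)) (x k) (p k))
    (hupd : ∀ k, x (k + 1) = (1 - θ k) • x k + θ k • p k) (k : ℕ) :
    ∀ z ∈ {z | -C z ∈ A z},
      pnorm S (x (k + 1) - z) ^ 2 + ε * pnorm S (p k - x k) ^ 2 ≤ pnorm S (x k - z) ^ 2 := by
  intro z hz
  have hθε : ε ≤ θ k * (2 - θ k) := by
    nlinarith [mul_nonneg (sub_nonneg.2 (hθ k).1) (sub_nonneg.2 (hθ k).2),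
      mul_nonneg hε0 (sub_nonneg.2 hε1)]
  have := (hp k).pnorm_relax_sub_sq_add_le hS convex_nofobHalfspace
    (setOf_neg_mem_subset_nofobHalfspace hA hC hβ hQ hQP (hxh k) hz) (by linarith [hθ k])
  rw [hupd k]
  nlinarith [mul_le_mul_of_nonneg_right hθε (sq_nonneg (pnorm S (p k - x k)))]

section LinearConvergence

variable {H : Type*} [NormedAddCommGroup H] [InnerProductSpace ℝ H] {S : H →L[ℝ] H}
  {Z : Set H} {cS : ℝ}

theorem mem_of_tendsto_of_tendsto_distS (hcS0 : 0 < cS)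
    (hcS : ∀ u : H, cS * ‖u‖ ^ 2 ≤ inner ℝ u (S u)) (hZ : IsClosed Z) (hZne : Z.Nonempty)
    {x : ℕ → H} {a : H} (hx : Tendsto x atTop (𝓝 a))
    (hd : Tendsto (fun k => distS S (x k) Z) atTop (𝓝 0)) : a ∈ Z := by
  have hinf : Tendsto (fun k => Metric.infDist (x k) Z) atTop (𝓝 0) := by
    refine squeeze_zero (fun _ => Metric.infDist_nonneg) (fun k => ?_)
      (by simpa using hd.div_const √cS)
    rw [le_div_iff₀ (Real.sqrt_pos.2 hcS0), mul_comm]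
    exact sqrt_mul_infDist_le_distS hcS hZne _
  rw [hZ.mem_iff_infDist_zero hZne]
  exact tendsto_nhds_unique (((Metric.continuous_infDist_pt Z).tendsto a).comp hx) hinf

theorem eventually_distS_le_of_subregular [FiniteDimensional ℝ H] (hS : S.IsPositive)
    {A : H → Set H} {C : H → H} (hA : IsMaxMonotoneOp A) (hC : Continuous C)
    (hZ : Z = {x | -C x ∈ A x}) (hZne : Z.Nonempty) {U : Set H} (hU : IsOpen U) (hZU : Z ⊆ U)
    {κ ν : ℝ} (hκ : 0 ≤ κ) (hν : 0 < ν)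
    (hsubreg : ∀ x v : H, x ∈ U → v - C x ∈ A x → pnorm S v < ν → distS S x Z ≤ κ * pnorm S v)
    {x y v : ℕ → H} {Lv : ℝ} (hx : Bornology.IsBounded (Set.range x))
    (hgap : Tendsto (fun k => ‖x k - y k‖) atTop (𝓝 0))
    (hv : ∀ k, ‖v k‖ ≤ Lv * ‖x k - y k‖) (hmem : ∀ k, v k - C (y k) ∈ A (y k)) :
    ∀ᶠ k in atTop, distS S (x k) Z ≤ √‖S‖ * (1 + κ * Lv) * ‖x k - y k‖ := by
  have hv0 : Tendsto v atTop (𝓝 0) := squeeze_zero_norm hv (by simpa using hgap.const_mul Lv)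
  obtain ⟨ρ, hρ⟩ := hx.subset_closedBall 0
  have hyK : ∀ᶠ k in atTop, y k ∈ Metric.closedBall 0 (ρ + 1) := by
    filter_upwards [hgap.eventually_lt_const one_pos] with k hk
    have hxk : ‖x k‖ ≤ ρ := mem_closedBall_zero_iff.1 (hρ ⟨k, rfl⟩)
    rw [mem_closedBall_zero_iff]
    calc ‖y k‖ ≤ ‖x k‖ + ‖x k - y k‖ := by
          simpa using norm_sub_le (x k) (x k - y k)
      _ ≤ ρ + 1 := by linarith
  have hyU := hA.eventually_mem_of_tendsto_zero hC hU (hZ ▸ hZU) (isCompact_closedBall 0 _) hyK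
    hv0 hmem
  have hvν : ∀ᶠ k in atTop, pnorm S (v k) < ν := by
    refine ((continuous_pnorm.tendsto 0).comp hv0).eventually_lt_const ?_
    simpa [pnorm] using hν
  filter_upwards [hyU, hvν] with k hkU hkν
  have hvS : pnorm S (v k) ≤ √‖S‖ * (Lv * ‖x k - y k‖) :=
    (pnorm_le_sqrt_opNorm_mul_norm _).trans (by gcongr; exact hv k)
  calc distS S (x k) Z ≤ pnorm S (x k - y k) + distS S (y k) Z :=
        distS_le_pnorm_sub_add_distS hS hZne _ _
    _ ≤ √‖S‖ * ‖x k - y k‖ + κ * (√‖S‖ * (Lv * ‖x k - y k‖)) :=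
        add_le_add (pnorm_le_sqrt_opNorm_mul_norm _)
          ((hsubreg _ _ hkU (hmem k) hkν).trans (by gcongr))
    _ = √‖S‖ * (1 + κ * Lv) * ‖x k - y k‖ := by ring

theorem isBounded_range_of_pnorm_sub_sq_antitone (hcS0 : 0 < cS)
    (hcS : ∀ u : H, cS * ‖u‖ ^ 2 ≤ inner ℝ u (S u)) {x : ℕ → H} {z : H}
    (h : ∀ k, pnorm S (x (k + 1) - z) ^ 2 ≤ pnorm S (x k - z) ^ 2) :
    Bornology.IsBounded (Set.range x) := by
  have hanti : Antitone fun k => pnorm S (x k - z) := antitone_nat_of_succ_le fun k =>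
    (pow_le_pow_iff_left₀ (pnorm_nonneg _) (pnorm_nonneg _) two_ne_zero).1 (h k)
  refine (Metric.isBounded_closedBall (x := z) (r := pnorm S (x 0 - z) / √cS)).subset ?_
  rintro _ ⟨k, rfl⟩
  rw [Metric.mem_closedBall, dist_eq_norm, le_div_iff₀ (Real.sqrt_pos.2 hcS0), mul_comm]
  exact (sqrt_mul_norm_le_pnorm hcS _).trans (hanti (Nat.zero_le k))

theorem sqrt_mul_pnorm_sub_le_two_mul_distS {x x' p : H} {θ ε : ℝ} (hε : 0 < ε)
    (hθ : 0 ≤ θ ∧ θ ≤ 2) (hupd : x' = (1 - θ) • x + θ • p)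
    (hdec : distS S x' Z ^ 2 + ε * pnorm S (p - x) ^ 2 ≤ distS S x Z ^ 2) :
    √ε * pnorm S (x - x') ≤ 2 * distS S x Z := by
  have hr : √ε * pnorm S (p - x) ≤ distS S x Z := by
    refine (pow_le_pow_iff_left₀ (mul_nonneg (Real.sqrt_nonneg _) (pnorm_nonneg _))
      (distS_nonneg _) two_ne_zero).1 ?_
    rw [mul_pow, Real.sq_sqrt hε.le]
    linarith [sq_nonneg (distS S x' Z)]
  rw [hupd, show x - ((1 - θ) • x + θ • p) = (-θ) • (p - x) by module, pnorm_smul, abs_neg,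
    abs_of_nonneg hθ.1]
  calc √ε * (θ * pnorm S (p - x)) = θ * (√ε * pnorm S (p - x)) := by ring
    _ ≤ 2 * (√ε * pnorm S (p - x)) :=
      mul_le_mul_of_nonneg_right hθ.2 (mul_nonneg (Real.sqrt_nonneg _) (pnorm_nonneg _))
    _ ≤ 2 * distS S x Z := by linarith

theorem linear_convergence_of_sq_distS_add_le [CompleteSpace H] (hcS0 : 0 < cS)
    (hcS : ∀ u : H, cS * ‖u‖ ^ 2 ≤ inner ℝ u (S u)) (hZ : IsClosed Z) (hZne : Z.Nonempty)
    {x p : ℕ → H} {θ : ℕ → ℝ} {ε E : ℝ} {K : ℕ} (hε : 0 < ε) (hθ : ∀ k, 0 ≤ θ k ∧ θ k ≤ 2)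
    (hupd : ∀ k, x (k + 1) = (1 - θ k) • x k + θ k • p k)
    (hdec : ∀ k, distS S (x (k + 1)) Z ^ 2 + ε * pnorm S (p k - x k) ^ 2 ≤ distS S (x k) Z ^ 2)
    (herr : ∀ k ≥ K, distS S (x k) Z ≤ E * pnorm S (p k - x k)) :
    ∃ c : ℝ, 0 ≤ c ∧ c < 1 ∧ (∀ k ≥ K, distS S (x (k + 1)) Z ≤ c * distS S (x k) Z) ∧
      ∃ xbar ∈ Z, ∃ R : ℝ, 0 ≤ R ∧ ∀ k ≥ K, pnorm S (x k - xbar) ≤ R * c ^ k := by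
  obtain ⟨c, hc0, hc1, hlin⟩ :=
    exists_lt_one_le_mul_of_sq_add_le hε (fun _ => distS_nonneg _) hdec herr
  have hgeo := le_geometric_of_le_mul (d := fun k => distS S (x k) Z) hc0 hlin
  set D := distS S (x K) Z / c ^ K
  have hD : 0 ≤ D := div_nonneg (distS_nonneg _) (pow_pos hc0 K).le
  have hstep : ∀ k ≥ K, ‖x k - x (k + 1)‖ ≤ 2 * D / (√ε * √cS) * c ^ k := by
    intro k hk
    rw [div_mul_eq_mul_div, le_div_iff₀ (by positivity)]
    calc ‖x k - x (k + 1)‖ * (√ε * √cS) = √ε * (√cS * ‖x k - x (k + 1)‖) := by ring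
      _ ≤ √ε * pnorm S (x k - x (k + 1)) := by gcongr; exact sqrt_mul_norm_le_pnorm hcS _
      _ ≤ 2 * distS S (x k) Z :=
        sqrt_mul_pnorm_sub_le_two_mul_distS hε (hθ k) (hupd k) (hdec k)
      _ ≤ 2 * D * c ^ k := by linarith [hgeo k hk]
  obtain ⟨xbar, hlim, hbound⟩ := exists_tendsto_norm_sub_le_geometric hc1 hstep
  have hd0 : Tendsto (fun k => distS S (x k) Z) atTop (𝓝 0) :=
    squeeze_zero' (Eventually.of_forall fun _ => distS_nonneg _)
      (eventually_atTop.2 ⟨K, hgeo⟩)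
      (by simpa using (tendsto_pow_atTop_nhds_zero_of_lt_one hc0.le hc1).const_mul D)
  refine ⟨c, hc0.le, hc1, hlin, xbar, mem_of_tendsto_of_tendsto_distS hcS0 hcS hZ hZne hlim hd0,
    √‖S‖ * (2 * D / (√ε * √cS)) / (1 - c), by have := sub_pos.2 hc1; positivity,
    fun k hk => ?_⟩
  calc pnorm S (x k - xbar) ≤ √‖S‖ * ‖x k - xbar‖ := pnorm_le_sqrt_opNorm_mul_norm _
    _ ≤ √‖S‖ * (2 * D / (√ε * √cS) * c ^ k / (1 - c)) := by gcongr; exact hbound k hk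
    _ = √‖S‖ * (2 * D / (√ε * √cS)) / (1 - c) * c ^ k := by ring

end LinearConvergence

/-- local linear convergence of NOFOB under metric subregularity in
finite dimensions. -/
theorem nofob_linear_convergence
    {H : Type*} [NormedAddCommGroup H] [InnerProductSpace ℝ H] [FiniteDimensional ℝ H]
    (P Pinv S : H →L[ℝ] H)
    (hPsa : IsSelfAdjoint P) (hSsa : IsSelfAdjoint S)
    (hPpos : ∃ c > 0, ∀ x : H, c * ‖x‖ ^ 2 ≤ inner ℝ x (P x))
    (hSpos : ∃ c > 0, ∀ x : H, c * ‖x‖ ^ 2 ≤ inner ℝ x (S x))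
    (hPinv₁ : P.comp Pinv = ContinuousLinearMap.id ℝ H)
    (hPinv₂ : Pinv.comp P = ContinuousLinearMap.id ℝ H)
    -- Assumption 1
    (A : H → Set H) (hA : IsMaxMonotoneOp A)
    (β : ℝ) (hβ0 : 0 ≤ β) (hβ4 : β < 4)
    (C : H → H)
    (hC0 : β = 0 → ∀ x y : H, C x = C y)
    (hCpos : 0 < β → ∀ x y : H,
      (1 / β) * pnorm Pinv (C x - C y) ^ 2 ≤ inner ℝ (C x - C y) (x - y))
    (Z : Set H) (hZ : Z = {x : H | -C x ∈ A x}) (hzer : Z.Nonempty)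
    -- kernels M_k
    (M : ℕ → H → H) (L_M : ℝ)
    (hMsm : ∀ k, ∀ x y : H, pnorm P (x - y) ^ 2 ≤ inner ℝ (M k x - M k y) (x - y))
    (hMlip : ∀ k, ∀ x y : H, ‖M k x - M k y‖ ≤ L_M * ‖x - y‖)
    -- relaxation parameters
    (θ : ℕ → ℝ) (εθ : ℝ) (hεθ : 0 < εθ ∧ εθ < 1)
    (hθ : ∀ k, εθ ≤ θ k ∧ θ k ≤ 2 - εθ)
    -- uniform metric subregularity of A + C at solutions for 0
    (κ ν : ℝ) (hκ : 0 ≤ κ) (hν : 0 < ν)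
    (U : Set H) (hUopen : IsOpen U) (hZU : Z ⊆ U)
    (hsubreg : ∀ x v : H, x ∈ U → v - C x ∈ A x → pnorm S v < ν →
      distS S x Z ≤ κ * pnorm S v)
    -- the algorithm
    (x xh p : ℕ → H)
    (hxh : ∀ k, M k (x k) - C (x k) - M k (xh k) ∈ A (xh k))
    (hp : ∀ k,
      (inner ℝ (M k (x k) - M k (xh k)) (p k - xh k) : ℝ) ≤
        β / 4 * pnorm P (x k - xh k) ^ 2 ∧
      ∀ z : H, (inner ℝ (M k (x k) - M k (xh k)) (z - xh k) : ℝ) ≤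
          β / 4 * pnorm P (x k - xh k) ^ 2 →
        pnorm S (p k - x k) ≤ pnorm S (z - x k))
    (hupd : ∀ k, x (k + 1) = (1 - θ k) • x k + θ k • p k) :
    ∃ (K₀ : ℕ) (c : ℝ), 0 ≤ c ∧ c < 1 ∧
      (∀ k ≥ K₀, distS S (x (k + 1)) Z ≤ c * distS S (x k) Z) ∧
      ∃ xbar ∈ Z, ∃ R : ℝ, 0 ≤ R ∧ ∀ k ≥ K₀, pnorm S (x k - xbar) ≤ R * c ^ k := by
  obtain ⟨cP, hcP0, hcP⟩ := hPpos
  obtain ⟨cS, hcS0, hcS⟩ := hSpos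
  have hP := ContinuousLinearMap.isPositive_of_mul_norm_sq_le hPsa hcP0.le hcP
  have hS := ContinuousLinearMap.isPositive_of_mul_norm_sq_le hSsa hcS0.le hcS
  have hQP : Function.LeftInverse Pinv P := fun w => congr($hPinv₂ w)
  have hQ := hP.of_rightInverse fun w => congr($hPinv₁ w)
  have hC : IsCocoercive Pinv β C := ⟨hC0, hCpos⟩
  have hCc := hC.continuous hβ0 hQ hQP
  have hproj : ∀ k, IsPnormProj S (nofobHalfspace P β (M k) (x k) (xh k)) (x k) (p k) := hp
  have hfejer : ∀ k, ∀ z ∈ Z, pnorm S (x (k + 1) - z) ^ 2 + εθ * pnorm S (p k - x k) ^ 2 ≤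
      pnorm S (x k - z) ^ 2 :=
    hZ ▸ nofob_fejer hS hA.1 hC hβ0 hQ hQP hεθ.1.le hεθ.2.le hθ hxh hproj hupd
  have hεr k : 0 ≤ εθ * pnorm S (p k - x k) ^ 2 := mul_nonneg hεθ.1.le (sq_nonneg _)
  have hdec k := distS_sq_add_le_of_forall hzer (hεr k) (hfejer k)
  have hr0 := tendsto_zero_of_sq_add_le (a := fun k => distS S (x k) Z) hεθ.1
    (fun _ => pnorm_nonneg _) hdec
  set L := max L_M 0
  have hMlip' k a b : ‖M k a - M k b‖ ≤ L * ‖a - b‖ :=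
    (hMlip k a b).trans (by gcongr; exact le_max_left _ _)
  set σ := (1 - β / 4) * cP * √cS
  have hσ : 0 < σ := mul_pos (mul_pos (by linarith) hcP0) (Real.sqrt_pos.2 hcS0)
  have hgap k : ‖x k - xh k‖ ≤ L / σ * pnorm S (p k - x k) := by
    rw [div_mul_eq_mul_div, le_div_iff₀ hσ, mul_comm]
    exact mul_norm_sub_le_mul_pnorm_of_mem_nofobHalfspace hP hcP hcS hβ4.le (le_max_right _ _)
      (hMsm k _ _) (hMlip' k _ _) (hproj k).1
  have hgap0 : Tendsto (fun k => ‖x k - xh k‖) atTop (𝓝 0) :=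
    squeeze_zero (fun _ => norm_nonneg _) hgap (by simpa using hr0.const_mul (L / σ))
  obtain ⟨z₀, hz₀⟩ := hzer
  have hbdd := isBounded_range_of_pnorm_sub_sq_antitone hcS0 hcS fun k =>
    le_of_add_le_of_nonneg_left (hfejer k z₀ hz₀) (hεr k)
  obtain ⟨K₀, herr⟩ := eventually_atTop.1 <| eventually_distS_le_of_subregular hS hA hCc hZ
    ⟨z₀, hz₀⟩ hUopen hZU hκ hν hsubreg hbdd hgap0
    (fun k => (norm_sub_le _ _).trans <| by
      rw [add_mul]; exact add_le_add (hMlip' k _ _) (hC.norm_sub_le hβ0 hQ hQP _ _))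
    (fun k => by convert hxh k using 1; abel)
  have herr' : ∀ k ≥ K₀, distS S (x k) Z ≤
      √‖S‖ * (1 + κ * (L + β * ‖P‖)) * (L / σ) * pnorm S (p k - x k) := fun k hk =>
    (herr k hk).trans (by rw [mul_assoc _ (L / σ)]; gcongr; exact hgap k)
  exact ⟨K₀, linear_convergence_of_sq_distS_add_le hcS0 hcS
    (hZ ▸ hA.isClosed_setOf_neg_mem hCc) ⟨z₀, hz₀⟩ hεθ.1
    (fun k => ⟨by linarith [hθ k], by linarith [hθ k]⟩) hupd hdec herr'⟩
end
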